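/- For a nonnegative integer n and parameters a, b, c, d with (d)_n ≠ 0 and all intermediate Pochhammer denominators nonzero: Σ_{i=0}^{n} (-n)_i (a)_i (b)_i / (i! (c)_i (d)_i) = [(c + d - a - b)_n / (d)_n] · Σ_{i=0}^{n} (-n)_i (c-a)_i (c-b)_i / (i! (c)_i (c - a - b + d)_i). -/

import Mathlib

/-!
Clearing denominators turns both sides into polynomial identities in `a, b, c, d`.
Expanding `(d + i)ₙ₋ᵢ = ((b + i) + (d - b))ₙ₋ᵢ` by the Vandermonde convolution and summing the
resulting inner series by Chu–Vandermonde gives the two-term relation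
`₃F₂(-n, a, b; c, d) ↔ ₃F₂(-n, c - a, b; c, 1 + b - d - n)`. Applying it once with `a` and `b`
swapped and once in reverse, using the symmetry of the middle series in its two numerator
parameters, yields the iterated transformation.
-/


noncomputable def poch (x : ℝ) (n : ℕ) : ℝ := ∏ i ∈ Finset.range n, (x + i)

open Finset

@[simp] lemma poch_zero (x : ℝ) : poch x 0 = 1 := prod_range_zero _

lemma poch_succ (x : ℝ) (n : ℕ) : poch x (n + 1) = poch x n * (x + n) :=
  prod_range_succ _ n

lemma poch_succ' (x : ℝ) (n : ℕ) : poch x (n + 1) = x * poch (x + 1) n := by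
  simp only [poch, prod_range_succ', Nat.cast_add_one, Nat.cast_zero, add_zero, add_assoc,
    add_comm (1 : ℝ), mul_comm]

lemma poch_add (x : ℝ) (m k : ℕ) : poch x (m + k) = poch x m * poch (x + m) k := by
  simp only [poch, prod_range_add, Nat.cast_add, add_assoc]

lemma poch_mul_poch_add_sub {i n : ℕ} (x : ℝ) (h : i ≤ n) :
    poch x i * poch (x + i) (n - i) = poch x n := by
  rw [← poch_add, Nat.add_sub_cancel' h]

lemma poch_eq_eval_ascPochhammer (x : ℝ) (n : ℕ) : poch x n = (ascPochhammer ℝ n).eval x := by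
  induction n with
  | zero => simp
  | succ n ih => rw [poch_succ, ih, ascPochhammer_succ_eval]

lemma poch_neg_natCast (n i : ℕ) :
    poch (-(n : ℝ)) i = (-1) ^ i * n.choose i * i.factorial := by
  rw [poch_eq_eval_ascPochhammer, ascPochhammer_eval_neg_eq_descPochhammer,
    descPochhammer_eval_eq_descFactorial, Nat.descFactorial_eq_factorial_mul_choose]
  push_cast
  ring

theorem poch_add_eq_sum_antidiagonal (x y : ℝ) (m : ℕ) :
    poch (x + y) m = ∑ p ∈ antidiagonal m, (m.choose p.1 : ℝ) * (poch x p.1 * poch y p.2) := by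
  induction m with
  | zero => simp
  | succ m ih =>
    rw [sum_antidiagonal_choose_succ_mul (fun i j => poch x i * poch y j), ← sum_add_distrib,
      poch_succ, ih, sum_mul]
    refine sum_congr rfl fun p hp => ?_
    rw [HasAntidiagonal.mem_antidiagonal] at hp
    rw [Nat.choose_symm_of_eq_add hp.symm, poch_succ, poch_succ, ← hp, Nat.cast_add]
    ring

theorem poch_sub_eq_sum_antidiagonal (z x : ℝ) (m : ℕ) :
    poch (z - x) m = ∑ p ∈ antidiagonal m,
      (m.choose p.1 : ℝ) * ((-1) ^ p.1 * poch x p.1 * poch (z + p.1) p.2) := by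
  induction m generalizing z with
  | zero => simp
  | succ m ih =>
    rw [sum_antidiagonal_choose_succ_mul (fun i j => (-1) ^ i * poch x i * poch (z + i) j),
      ← sum_add_distrib, poch_succ', sub_add_eq_add_sub, ih, mul_sum]
    refine sum_congr rfl fun p hp => ?_
    rw [Nat.choose_symm_of_eq_add (HasAntidiagonal.mem_antidiagonal.mp hp).symm, poch_succ',
      poch_succ, Nat.cast_add_one]
    ring_nf

theorem sum_antidiagonal_antidiagonal_assoc {M : Type*} [AddCommMonoid M] (f : ℕ → ℕ → ℕ → M)
    (n : ℕ) :
    ∑ p ∈ antidiagonal n, ∑ q ∈ antidiagonal p.2, f p.1 q.1 q.2 =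
      ∑ p ∈ antidiagonal n, ∑ q ∈ antidiagonal p.1, f q.1 q.2 p.2 := by
  simp only [sum_sigma']
  apply sum_nbij' (fun x => ⟨(x.1.1 + x.2.1, x.2.2), (x.1.1, x.2.1)⟩)
    (fun x => ⟨(x.2.1, x.2.2 + x.1.2), (x.2.2, x.1.2)⟩) <;> aesop (add simp [add_assoc])

lemma cast_choose_mul_choose_eq {R : Type*} [CommSemiring R] {i k l n : ℕ} (h : i + k + l = n) :
    (n.choose (i + k) : R) * (i + k).choose i = n.choose i * (k + l).choose k := by
  have hchoose := Nat.choose_mul (n := n) (k := i + k) (s := i) (by omega)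
  rw [show n - i = k + l by omega, show i + k - i = k by omega] at hchoose
  rw [← Nat.cast_mul, ← Nat.cast_mul, hchoose]

/-- `(c)ₙ (d)ₙ · ₃F₂(-n, a, b; c, d; 1)`, cleared of denominators. -/
noncomputable def clearedF32 (n : ℕ) (a b c d : ℝ) : ℝ :=
  ∑ p ∈ antidiagonal n, (n.choose p.1 : ℝ) *
    ((-1) ^ p.1 * poch a p.1 * poch b p.1 * poch (c + p.1) p.2 * poch (d + p.1) p.2)

/-- Since `(q)ₙ₋ᵢ = (-1)ⁱ (q)ₙ / (1 - q - n)ᵢ`, this is `(c)ₙ (q)ₙ · ₃F₂(-n, a, b; c, 1 - q - n; 1)`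
cleared of denominators. -/
noncomputable def clearedF32Rev (n : ℕ) (a b c q : ℝ) : ℝ :=
  ∑ p ∈ antidiagonal n, (n.choose p.1 : ℝ) *
    (poch a p.1 * poch b p.1 * poch (c + p.1) p.2 * poch q p.2)

lemma clearedF32_comm (n : ℕ) (a b c d : ℝ) : clearedF32 n a b c d = clearedF32 n b a c d :=
  sum_congr rfl fun _ _ => by ring

lemma clearedF32Rev_comm (n : ℕ) (a b c q : ℝ) :
    clearedF32Rev n a b c q = clearedF32Rev n b a c q :=
  sum_congr rfl fun _ _ => by ring

theorem clearedF32_eq_clearedF32Rev (n : ℕ) (a b c d : ℝ) :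
    clearedF32 n a b c d = clearedF32Rev n (c - a) b c (d - b) := by
  have expand_d : ∀ i j : ℕ, poch (d + i) j =
      ∑ q ∈ antidiagonal j, (j.choose q.1 : ℝ) * (poch (b + i) q.1 * poch (d - b) q.2) := by
    intro i j
    rw [← poch_add_eq_sum_antidiagonal]
    ring_nf
  have regroup : ∀ i k l : ℕ, i + k + l = n →
      (n.choose i : ℝ) * ((-1) ^ i * poch a i * poch b i * poch (c + i) (k + l) *
        ((k + l).choose k * (poch (b + i) k * poch (d - b) l))) =
      (n.choose (i + k) : ℝ) * (poch b (i + k) * poch (c + (i + k : ℕ)) l * poch (d - b) l) *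
        ((i + k).choose i * ((-1) ^ i * poch a i * poch (c + i) k)) := by
    intro i k l h
    have hchoose := cast_choose_mul_choose_eq (R := ℝ) h
    push_cast
    rw [poch_add b, poch_add (c + i), add_assoc c]
    linear_combination (-((-1) ^ i * poch a i * poch b i * poch (b + i) k * poch (c + i) k *
      poch (c + (i + k)) l * poch (d - b) l)) * hchoose
  calc clearedF32 n a b c d
      = ∑ p ∈ antidiagonal n, ∑ q ∈ antidiagonal p.2,
          (n.choose (p.1 + q.1) : ℝ) *
            (poch b (p.1 + q.1) * poch (c + (p.1 + q.1 : ℕ)) q.2 * poch (d - b) q.2) *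
          ((p.1 + q.1).choose p.1 * ((-1) ^ p.1 * poch a p.1 * poch (c + p.1) q.1)) := by
        unfold clearedF32
        refine sum_congr rfl fun p hp => ?_
        rw [expand_d, mul_sum, mul_sum]
        refine sum_congr rfl fun q hq => ?_
        rw [HasAntidiagonal.mem_antidiagonal] at hp hq
        rw [← hq]
        exact regroup _ _ _ (by omega)
    _ = ∑ p ∈ antidiagonal n,
          (n.choose p.1 : ℝ) * (poch b p.1 * poch (c + p.1) p.2 * poch (d - b) p.2) *
          ∑ q ∈ antidiagonal p.1,
            (p.1.choose q.1 : ℝ) * ((-1) ^ q.1 * poch a q.1 * poch (c + q.1) q.2) := by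
        rw [sum_antidiagonal_antidiagonal_assoc (fun i k l => (n.choose (i + k) : ℝ) *
          (poch b (i + k) * poch (c + (i + k : ℕ)) l * poch (d - b) l) *
          ((i + k).choose i * ((-1) ^ i * poch a i * poch (c + i) k)))]
        refine sum_congr rfl fun p _ => ?_
        rw [mul_sum]
        refine sum_congr rfl fun q hq => ?_
        rw [HasAntidiagonal.mem_antidiagonal.mp hq]
    _ = clearedF32Rev n (c - a) b c (d - b) := by
        unfold clearedF32Rev
        refine sum_congr rfl fun p _ => ?_
        rw [← poch_sub_eq_sum_antidiagonal]
        ring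

theorem clearedF32_thomae (n : ℕ) (a b c d : ℝ) :
    clearedF32 n a b c d = clearedF32 n (c - a) (c - b) c (c - a - b + d) := by
  rw [clearedF32_comm, clearedF32_eq_clearedF32Rev, clearedF32Rev_comm,
    clearedF32_eq_clearedF32Rev, sub_sub_cancel, show c - a - b + d - (c - b) = d - a by ring]

theorem sum_range_poch_div_eq_clearedF32_div {n : ℕ} {c d : ℝ} (hc : poch c n ≠ 0)
    (hd : poch d n ≠ 0) (a b : ℝ) :
    ∑ i ∈ range (n + 1),
      poch (-(n : ℝ)) i * poch a i * poch b i / ((i.factorial : ℝ) * poch c i * poch d i)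
    = clearedF32 n a b c d / (poch c n * poch d n) := by
  rw [clearedF32, Nat.sum_antidiagonal_eq_sum_range_succ_mk, sum_div]
  refine sum_congr rfl fun i hi => ?_
  have hin : i ≤ n := Nat.lt_succ_iff.mp (mem_range.mp hi)
  rw [← poch_mul_poch_add_sub c hin] at hc ⊢
  rw [← poch_mul_poch_add_sub d hin] at hd ⊢
  rw [poch_neg_natCast]
  field_simp [left_ne_zero_of_mul hc, right_ne_zero_of_mul hc, left_ne_zero_of_mul hd,
    right_ne_zero_of_mul hd]

/-- Iterated Thomae transformation for terminating ₃F₂ series at argument 1. -/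
theorem stmt3 (n : ℕ) (a b c d : ℝ)
    (hc : ∀ i ≤ n, poch c i ≠ 0) (hd : ∀ i ≤ n, poch d i ≠ 0)
    (he : ∀ i ≤ n, poch (c - a - b + d) i ≠ 0) :
    ∑ i ∈ Finset.range (n + 1),
      poch (-(n : ℝ)) i * poch a i * poch b i /
        ((Nat.factorial i : ℝ) * poch c i * poch d i)
    = (poch (c + d - a - b) n / poch d n) *
      ∑ i ∈ Finset.range (n + 1),
        poch (-(n : ℝ)) i * poch (c - a) i * poch (c - b) i /
          ((Nat.factorial i : ℝ) * poch c i * poch (c - a - b + d) i) := by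
  rw [sum_range_poch_div_eq_clearedF32_div (hc n le_rfl) (hd n le_rfl),
    sum_range_poch_div_eq_clearedF32_div (hc n le_rfl) (he n le_rfl), clearedF32_thomae,
    show c + d - a - b = c - a - b + d by ring]
  field_simp [hc n le_rfl, hd n le_rfl, he n le_rfl]
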